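/- If a path γ : [a,b] → ℍ \ {0} never meets the real axis, then for each k ∈ ℤ the map t ↦ log|γ(t)| + Arg_{2k}(γ(t)) is a continuous continuation of the logarithm along γ, i.e. it is continuous and satisfies exp(log|γ(t)| + Arg_{2k}(γ(t))) = γ(t) for all t. -/

import Mathlib

open Quaternion Set

/-- The quaternionic exponential, given by the power series `∑ qᵏ/k!`. -/
noncomputable def qexp (q : ℍ[ℝ]) : ℍ[ℝ] := NormedSpace.exp q

/-- The slice argument `arg_ℐ(q) ∈ (0,π)` of a nonreal quaternion. -/
noncomputable def sliceArg (q : ℍ[ℝ]) : ℝ := Real.arccos (q.re / ‖q‖)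

/-- The imaginary unit `ℐ(q)` of a nonreal quaternion. -/
noncomputable def unitIm (q : ℍ[ℝ]) : ℍ[ℝ] := ‖q.im‖⁻¹ • q.im

/- `Arg(q) = ℐ(q)·arg_ℐ(q)` for nonreal `q`, and `0` on the reals. -/
open scoped Classical in
noncomputable def qArg (q : ℍ[ℝ]) : ℍ[ℝ] :=
  if q.im = 0 then 0 else sliceArg q • unitIm q

/-- The `2k`-th branch of the quaternionic argument:
`Arg_{2k}(q) = ℐ(q)·(arg_ℐ(q) + 2kπ)`. -/
noncomputable def qArg2k (k : ℤ) (q : ℍ[ℝ]) : ℍ[ℝ] :=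
  (sliceArg q + 2 * (k : ℝ) * Real.pi) • unitIm q

/-!
A nonreal quaternion `q` lies in the complex slice spanned by `1` and its imaginary unit `ℐ(q)`,
which squares to `-1`. In that slice `q = ‖q‖ (cos θ + ℐ(q) sin θ)` with `θ = arg_ℐ(q)`, and the
quaternionic exponential of `r + φ ℐ(q)` is `eʳ (cos φ + ℐ(q) sin φ)` exactly as in `ℂ`; so every
`log‖q‖ + Arg_{2k}(q)` is a logarithm of `q`. Along the path it is continuous because `arg_ℐ` and `ℐ`
are continuous off the real axis.
-/

namespace Quaternion

theorem ne_zero_of_im_ne_zero {q : ℍ[ℝ]} (hq : q.im ≠ 0) : q ≠ 0 := fun h => hq (by simp [h])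

theorem sq_norm_eq_sq_re_add_sq_norm_im (q : ℍ[ℝ]) : ‖q‖ ^ 2 = q.re ^ 2 + ‖q.im‖ ^ 2 := by
  simp only [sq, ← normSq_eq_norm_mul_self, normSq_def', re_im, imI_im, imJ_im, imK_im]
  ring

theorem exp_coe_add_smul_of_re_eq_zero_of_norm_eq_one (r θ : ℝ) {u : ℍ[ℝ]} (hu : u.re = 0)
    (hu₁ : ‖u‖ = 1) :
    NormedSpace.exp (r + θ • u : ℍ[ℝ]) = Real.exp r • (↑(Real.cos θ) + Real.sin θ • u) := by
  have hre : (r + θ • u : ℍ[ℝ]).re = r := by simp [re_smul, hu]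
  have him : (r + θ • u : ℍ[ℝ]).im = θ • u := by ext <;> simp [hu]
  have hsin : Real.sin |θ| / |θ| * θ = Real.sin θ := by
    rcases eq_or_ne θ 0 with rfl | hθ
    · simp
    rcases abs_cases θ with ⟨h, -⟩ | ⟨h, -⟩ <;> rw [h] <;> field_simp
    rw [Real.sin_neg]; ring
  rw [exp_eq, hre, him, norm_smul, hu₁, mul_one, Real.norm_eq_abs, Real.cos_abs, smul_smul, hsin,
    ← Real.exp_eq_exp_ℝ]

end Quaternion

theorem re_unitIm (q : ℍ[ℝ]) : (unitIm q).re = 0 := by simp [unitIm, re_smul]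

theorem norm_unitIm {q : ℍ[ℝ]} (hq : q.im ≠ 0) : ‖unitIm q‖ = 1 := by
  rw [unitIm, norm_smul, norm_inv, norm_norm, inv_mul_cancel₀ (norm_ne_zero_iff.mpr hq)]

theorem abs_re_div_norm_le_one (q : ℍ[ℝ]) : |q.re / ‖q‖| ≤ 1 := by
  rw [abs_div, abs_norm]
  refine div_le_one_of_le₀ (abs_le_of_sq_le_sq ?_ (norm_nonneg q)) (norm_nonneg q)
  nlinarith [sq_norm_eq_sq_re_add_sq_norm_im q, sq_nonneg ‖q.im‖]

theorem cos_sliceArg (q : ℍ[ℝ]) : Real.cos (sliceArg q) = q.re / ‖q‖ := by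
  have h := abs_re_div_norm_le_one q
  rw [sliceArg, Real.cos_arccos (neg_le_of_abs_le h) (le_of_abs_le h)]

theorem sin_sliceArg {q : ℍ[ℝ]} (hq : q ≠ 0) : Real.sin (sliceArg q) = ‖q.im‖ / ‖q‖ := by
  have hn : ‖q‖ ≠ 0 := norm_ne_zero_iff.mpr hq
  rw [sliceArg, Real.sin_arccos, ← Real.sqrt_sq (by positivity : 0 ≤ ‖q.im‖ / ‖q‖)]
  congr 1
  field_simp
  linarith [sq_norm_eq_sq_re_add_sq_norm_im q]

theorem norm_smul_cos_sliceArg_add_sin_sliceArg_smul_unitIm {q : ℍ[ℝ]} (hq : q.im ≠ 0) :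
    ‖q‖ • (↑(Real.cos (sliceArg q)) + Real.sin (sliceArg q) • unitIm q) = q := by
  have hq₀ : q ≠ 0 := ne_zero_of_im_ne_zero hq
  have hn : ‖q‖ ≠ 0 := norm_ne_zero_iff.mpr hq₀
  have him : ‖q.im‖ ≠ 0 := norm_ne_zero_iff.mpr hq
  have hscale : ‖q‖ * (‖q.im‖ / ‖q‖ * ‖q.im‖⁻¹) = 1 := by field_simp
  rw [cos_sliceArg, sin_sliceArg hq₀, unitIm, smul_smul, smul_add, smul_smul, ← coe_smul,
    smul_eq_mul, mul_div_cancel₀ _ hn, hscale, one_smul, re_add_im]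

theorem qexp_log_norm_add_qArg2k {q : ℍ[ℝ]} (hq : q.im ≠ 0) (k : ℤ) :
    qexp (↑(Real.log ‖q‖) + qArg2k k q) = q := by
  have hq₀ : q ≠ 0 := ne_zero_of_im_ne_zero hq
  have hshift : sliceArg q + 2 * (k : ℝ) * Real.pi = sliceArg q + k * (2 * Real.pi) := by ring
  rw [qexp, qArg2k, exp_coe_add_smul_of_re_eq_zero_of_norm_eq_one _ _ (re_unitIm q)
    (norm_unitIm hq), Real.exp_log (norm_pos_iff.mpr hq₀), hshift, Real.cos_add_int_mul_two_pi,
    Real.sin_add_int_mul_two_pi, norm_smul_cos_sliceArg_add_sin_sliceArg_smul_unitIm hq]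

theorem continuousOn_sliceArg : ContinuousOn sliceArg {q : ℍ[ℝ] | q ≠ 0} :=
  Real.continuous_arccos.comp_continuousOn <|
    continuous_re.continuousOn.div continuous_norm.continuousOn fun _ hq => norm_ne_zero_iff.mpr hq

theorem continuousOn_unitIm : ContinuousOn unitIm {q : ℍ[ℝ] | q.im ≠ 0} :=
  ((continuous_norm.comp continuous_im).continuousOn.inv₀ fun _ hq => norm_ne_zero_iff.mpr hq).smul
    continuous_im.continuousOn

theorem continuousOn_log_norm_add_qArg2k (k : ℤ) :
    ContinuousOn (fun q : ℍ[ℝ] => (↑(Real.log ‖q‖) : ℍ[ℝ]) + qArg2k k q) {q | q.im ≠ 0} := by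
  have hsub : {q : ℍ[ℝ] | q.im ≠ 0} ⊆ {q | q ≠ 0} := fun _ => ne_zero_of_im_ne_zero
  have hlog : ContinuousOn (fun q : ℍ[ℝ] => Real.log ‖q‖) {q | q ≠ 0} :=
    continuous_norm.continuousOn.log fun _ hq => norm_ne_zero_iff.mpr hq
  exact (continuous_coe.comp_continuousOn (hlog.mono hsub)).add
    (((continuousOn_sliceArg.mono hsub).add continuousOn_const).smul continuousOn_unitIm)

theorem branch_log_along_path_general (a b : ℝ) (γ : ℝ → ℍ[ℝ]) (hγ : ContinuousOn γ (Icc a b))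
    (hreal : ∀ t ∈ Icc a b, (γ t).im ≠ 0) (k : ℤ) :
    ContinuousOn (fun t => ((Real.log ‖γ t‖ : ℝ) : ℍ[ℝ]) + qArg2k k (γ t)) (Icc a b) ∧
      ∀ t ∈ Icc a b, qexp (((Real.log ‖γ t‖ : ℝ) : ℍ[ℝ]) + qArg2k k (γ t)) = γ t :=
  ⟨(continuousOn_log_norm_add_qArg2k k).comp hγ hreal,
    fun t ht => qexp_log_norm_add_qArg2k (hreal t ht) k⟩

theorem branch_log_along_path (a b : ℝ) (hab : a ≤ b) (γ : ℝ → ℍ[ℝ])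
    (hγ : ContinuousOn γ (Icc a b)) (hne : ∀ t ∈ Icc a b, γ t ≠ 0)
    (hreal : ∀ t ∈ Icc a b, (γ t).im ≠ 0) (k : ℤ) :
    ContinuousOn (fun t => ((Real.log ‖γ t‖ : ℝ) : ℍ[ℝ]) + qArg2k k (γ t)) (Icc a b) ∧
      ∀ t ∈ Icc a b, qexp (((Real.log ‖γ t‖ : ℝ) : ℍ[ℝ]) + qArg2k k (γ t)) = γ t :=
  branch_log_along_path_general a b γ hγ hreal k
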